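/- For every ν with 0 < ν < √2, the soliton on finite background A(ξ,τ) = e^{−iξ}(G(ξ,τ)e^{iφ(ξ)} − 1), with σ = ν√(2−ν²), G(ξ,τ) = ν√2·√(2ν²cosh²(σξ) − σ²)/(ν√2·cosh(σξ) − σcos(ντ)) and φ(ξ) = arctan(−(σ/ν²)tanh(σξ)), is a solution of the spatial nonlinear Schrödinger equation with normalized coefficients: ∂ξA + i∂²τA + i|A|²A = 0 for all (ξ,τ) ∈ ℝ². -/

import Mathlib

open Real Filter Topology

/-- Benjamin–Feir growth rate `σ = ν√(2−ν²)`. -/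
noncomputable def sfbSigma (ν : ℝ) : ℝ := ν * Real.sqrt (2 - ν ^ 2)

/-- Displaced amplitude `G(ξ,τ) = P(ξ)/(Q(ξ) − σ cos(ντ))` of the SFB, with
`P(ξ) = ν√2·√(2ν²cosh²(σξ) − σ²)` and `Q(ξ) = ν√2·cosh(σξ)`. -/
noncomputable def sfbG (ν ξ τ : ℝ) : ℝ :=
  (ν * Real.sqrt 2 * Real.sqrt (2 * ν ^ 2 * Real.cosh (sfbSigma ν * ξ) ^ 2 - sfbSigma ν ^ 2)) /
  (ν * Real.sqrt 2 * Real.cosh (sfbSigma ν * ξ) - sfbSigma ν * Real.cos (ν * τ))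

/-- SFB phase `φ(ξ) = arctan(−(σ/ν²) tanh(σξ))`. -/
noncomputable def sfbPhi (ν ξ : ℝ) : ℝ :=
  Real.arctan (-(sfbSigma ν / ν ^ 2) * Real.tanh (sfbSigma ν * ξ))

/-- The soliton on finite background: `A(ξ,τ) = e^{−iξ}(G(ξ,τ)e^{iφ(ξ)} − 1)`. -/
noncomputable def sfbA (ν ξ τ : ℝ) : ℂ :=
  Complex.exp (-Complex.I * (ξ : ℂ)) *
    ((sfbG ν ξ τ : ℂ) * Complex.exp (Complex.I * (sfbPhi ν ξ : ℂ)) - 1)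

/-!
Writing `A = e^{-iξ} B` removes the background: `A` solves the NLS equation iff `B` solves
`B_ξ + i B_ττ + i (|B|² - 1) B = 0`. With `q = ν√2 cosh(σξ)`, the polar factor `G e^{iφ}` is
`M / D` for `M = ν² q - i q'` and `D = q - σ cos(ντ)`, so `B = M / D - 1`. Since `D_ττ` and
`D_τ²` are polynomials in `D` with coefficients depending on `ξ` only, `D³` times the residual of
`B` is a polynomial in `D`; its coefficients vanish because `q'' = σ² q`,
`q'² = σ² (q² - 2ν²)` and `σ² = 2ν² - ν⁴`, i.e. `|M|² = 2ν² (q² - σ²)` and `M̄ = ν² q + i q'`.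
-/

open Complex (I)

theorem exp_I_mul_arctan (x : ℝ) :
    Complex.exp (I * arctan x) = (1 + x * I) / √(1 + x ^ 2) := by
  rw [mul_comm, Complex.exp_mul_I, ← Complex.ofReal_cos, ← Complex.ofReal_sin, cos_arctan,
    sin_arctan]
  push_cast
  ring

theorem nls_residual_of_gauge {A B : ℝ → ℝ → ℂ} (hA : ∀ x t, A x t = Complex.exp (-I * x) * B x t)
    {ξ τ : ℝ} (hB : DifferentiableAt ℝ (fun x => B x τ) ξ) :
    deriv (fun x => A x τ) ξ + I * deriv (deriv fun t => A ξ t) τ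
        + I * (‖A ξ τ‖ : ℂ) ^ 2 * A ξ τ
      = Complex.exp (-I * ξ) * (deriv (fun x => B x τ) ξ + I * deriv (deriv fun t => B ξ t) τ
        + I * ((‖B ξ τ‖ : ℂ) ^ 2 - 1) * B ξ τ) := by
  have hgauge : HasDerivAt (fun x : ℝ => Complex.exp (-I * x)) (-I * Complex.exp (-I * ξ)) ξ := by
    simpa [mul_comm] using ((hasDerivAt_id ξ).ofReal_comp.const_mul (-I)).cexp
  have hnorm : ‖Complex.exp (-I * ξ)‖ = 1 := by simp [Complex.norm_exp]
  have hAx : deriv (fun x => A x τ) ξ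
      = -I * Complex.exp (-I * ξ) * B ξ τ + Complex.exp (-I * ξ) * deriv (fun x => B x τ) ξ := by
    simp only [hA]
    exact (hgauge.mul hB.hasDerivAt).deriv
  rw [hAx]
  simp only [hA, deriv_const_mul_field', deriv_const_mul_field, norm_mul, hnorm, one_mul]
  ring

theorem hasDerivAt_inv_sub_mul_cos {a b ω t : ℝ} (h : a - b * cos (ω * t) ≠ 0) :
    HasDerivAt (fun t => (a - b * cos (ω * t))⁻¹)
      (-(b * ω * sin (ω * t)) / (a - b * cos (ω * t)) ^ 2) t :=
  ((((hasDerivAt_id t).const_mul ω).cos.const_mul b).const_sub a |>.fun_inv h).congr_deriv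
    (by simp; ring)

theorem hasDerivAt_sin_div_sq_sub_mul_cos {a b ω t : ℝ} (h : a - b * cos (ω * t) ≠ 0) :
    HasDerivAt (fun t => -(b * ω * sin (ω * t)) / (a - b * cos (ω * t)) ^ 2)
      (ω ^ 2 * (2 * b ^ 2 * sin (ω * t) ^ 2 - b * cos (ω * t) * (a - b * cos (ω * t)))
        / (a - b * cos (ω * t)) ^ 3) t := by
  have hD := (((hasDerivAt_id t).const_mul ω).cos.const_mul b).const_sub a
  refine ((((hasDerivAt_id t).const_mul ω).sin.const_mul (b * ω)).neg.fun_div (hD.pow 2)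
    (pow_ne_zero 2 h)).congr_deriv ?_
  simp only [id, Pi.pow_apply, Pi.neg_apply]
  field_simp
  ring

noncomputable def sfbQ (ν ξ : ℝ) : ℝ := ν * √2 * cosh (sfbSigma ν * ξ)

noncomputable def sfbD (ν ξ τ : ℝ) : ℝ := sfbQ ν ξ - sfbSigma ν * cos (ν * τ)

noncomputable def sfbQ' (ν ξ : ℝ) : ℝ := sfbSigma ν * (ν * √2 * sinh (sfbSigma ν * ξ))

noncomputable def sfbM (ν ξ : ℝ) : ℂ := ν ^ 2 * sfbQ ν ξ - sfbQ' ν ξ * I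

noncomputable def sfbB (ν ξ τ : ℝ) : ℂ := sfbM ν ξ / sfbD ν ξ τ - 1

theorem sfbSigma_sq {ν : ℝ} (hν : ν ^ 2 ≤ 2) : sfbSigma ν ^ 2 = 2 * ν ^ 2 - ν ^ 4 := by
  rw [sfbSigma, mul_pow, sq_sqrt (by linarith)]
  ring

theorem sfbSigma_lt {ν : ℝ} (hν : 0 < ν) : sfbSigma ν < ν * √2 :=
  mul_lt_mul_of_pos_left ((sqrt_lt_sqrt_iff_of_pos two_pos).2 (by nlinarith)) hν

theorem sfbD_pos {ν : ℝ} (hν : 0 < ν) (ξ τ : ℝ) : 0 < sfbD ν ξ τ := by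
  have hσ : 0 ≤ sfbSigma ν := mul_nonneg hν.le (sqrt_nonneg _)
  have hcos : sfbSigma ν * cos (ν * τ) ≤ sfbSigma ν := mul_le_of_le_one_right hσ (cos_le_one _)
  have hcosh : ν * √2 ≤ ν * √2 * cosh (sfbSigma ν * ξ) :=
    le_mul_of_one_le_right (by positivity) (one_le_cosh _)
  rw [sfbD, sfbQ]
  linarith [sfbSigma_lt hν]

theorem sqrt_sfbG_numerator_eq {ν : ℝ} (hν0 : ν ≠ 0) (hν2 : ν ^ 2 ≤ 2) (ξ : ℝ) :
    √(2 * ν ^ 2 * cosh (sfbSigma ν * ξ) ^ 2 - sfbSigma ν ^ 2)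
      = ν ^ 2 * cosh (sfbSigma ν * ξ)
        * √(1 + (-(sfbSigma ν / ν ^ 2) * tanh (sfbSigma ν * ξ)) ^ 2) := by
  have hc := cosh_pos (sfbSigma ν * ξ)
  rw [← sqrt_sq (by positivity : 0 ≤ ν ^ 2 * cosh (sfbSigma ν * ξ)), ← sqrt_mul (sq_nonneg _),
    tanh_eq_sinh_div_cosh]
  congr 1
  field_simp
  linear_combination -sfbSigma ν ^ 2 * sinh_sq (sfbSigma ν * ξ)
    - cosh (sfbSigma ν * ξ) ^ 2 * sfbSigma_sq hν2

theorem sfbG_mul_exp_I_mul_sfbPhi {ν : ℝ} (hν0 : 0 < ν) (hν2 : ν ^ 2 ≤ 2) (ξ τ : ℝ) :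
    (sfbG ν ξ τ : ℂ) * Complex.exp (I * sfbPhi ν ξ) = sfbM ν ξ / sfbD ν ξ τ := by
  have hc := cosh_pos (sfbSigma ν * ξ)
  have hD : (sfbD ν ξ τ : ℂ) ≠ 0 := by exact_mod_cast (sfbD_pos hν0 ξ τ).ne'
  have hx : 0 < √(1 + (-(sfbSigma ν / ν ^ 2) * tanh (sfbSigma ν * ξ)) ^ 2) :=
    sqrt_pos.2 (by positivity)
  rw [sfbPhi, exp_I_mul_arctan, sfbG, sqrt_sfbG_numerator_eq hν0.ne' hν2, sfbM, sfbQ',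
    show ν * √2 * cosh (sfbSigma ν * ξ) - sfbSigma ν * cos (ν * τ) = sfbD ν ξ τ from rfl, sfbQ]
  generalize √(1 + (-(sfbSigma ν / ν ^ 2) * tanh (sfbSigma ν * ξ)) ^ 2) = r at hx ⊢
  rw [tanh_eq_sinh_div_cosh]
  generalize cosh (sfbSigma ν * ξ) = c at hc ⊢
  generalize sinh (sfbSigma ν * ξ) = s
  generalize sfbD ν ξ τ = D at hD ⊢
  have hν : (ν : ℂ) ≠ 0 := by exact_mod_cast hν0.ne'
  have hr : (r : ℂ) ≠ 0 := by exact_mod_cast hx.ne'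
  have hc' : (c : ℂ) ≠ 0 := by exact_mod_cast hc.ne'
  push_cast
  field_simp
  ring

theorem sfbA_eq_exp_mul_sfbB {ν : ℝ} (hν0 : 0 < ν) (hν2 : ν ^ 2 ≤ 2) (ξ τ : ℝ) :
    sfbA ν ξ τ = Complex.exp (-I * ξ) * sfbB ν ξ τ := by
  rw [sfbA, sfbG_mul_exp_I_mul_sfbPhi hν0 hν2, sfbB]

theorem hasDerivAt_sfbQ (ν ξ : ℝ) : HasDerivAt (sfbQ ν) (sfbQ' ν ξ) ξ :=
  (((hasDerivAt_id ξ).const_mul (sfbSigma ν)).cosh.const_mul (ν * √2)).congr_deriv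
    (by rw [sfbQ']; simp; ring)

theorem hasDerivAt_sfbQ' (ν ξ : ℝ) : HasDerivAt (sfbQ' ν) (sfbSigma ν ^ 2 * sfbQ ν ξ) ξ :=
  ((((hasDerivAt_id ξ).const_mul (sfbSigma ν)).sinh.const_mul (ν * √2)).const_mul
    (sfbSigma ν)).congr_deriv (by rw [sfbQ]; simp; ring)

theorem sfbQ'_sq (ν ξ : ℝ) : sfbQ' ν ξ ^ 2 = sfbSigma ν ^ 2 * (sfbQ ν ξ ^ 2 - 2 * ν ^ 2) := by
  rw [sfbQ', sfbQ]
  linear_combination sfbSigma ν ^ 2 * ν ^ 2 * √2 ^ 2 * sinh_sq (sfbSigma ν * ξ)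
    - sfbSigma ν ^ 2 * ν ^ 2 * sq_sqrt zero_le_two

theorem hasDerivAt_sfbM (ν ξ : ℝ) :
    HasDerivAt (sfbM ν) (ν ^ 2 * sfbQ' ν ξ - sfbSigma ν ^ 2 * sfbQ ν ξ * I) ξ :=
  (((hasDerivAt_sfbQ ν ξ).ofReal_comp.const_mul _).sub
    ((hasDerivAt_sfbQ' ν ξ).ofReal_comp.mul_const I)).congr_deriv (by push_cast; ring)

theorem hasDerivAt_sfbB_fst {ν : ℝ} (hν0 : 0 < ν) (ξ τ : ℝ) :
    HasDerivAt (fun x => sfbB ν x τ)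
      (((ν ^ 2 * sfbQ' ν ξ - sfbSigma ν ^ 2 * sfbQ ν ξ * I) * sfbD ν ξ τ
        - sfbM ν ξ * sfbQ' ν ξ) / sfbD ν ξ τ ^ 2) ξ := by
  have hD : HasDerivAt (fun x => sfbD ν x τ) (sfbQ' ν ξ) ξ :=
    (hasDerivAt_sfbQ ν ξ).sub_const _
  exact ((hasDerivAt_sfbM ν ξ).fun_div hD.ofReal_comp
    (by exact_mod_cast (sfbD_pos hν0 ξ τ).ne')).sub_const 1

theorem deriv_deriv_sfbB_snd {ν : ℝ} (hν0 : 0 < ν) (ξ τ : ℝ) :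
    deriv (deriv fun t => sfbB ν ξ t) τ
      = sfbM ν ξ * (ν ^ 2 * (2 * sfbSigma ν ^ 2 * sin (ν * τ) ^ 2
        - sfbSigma ν * cos (ν * τ) * sfbD ν ξ τ) / sfbD ν ξ τ ^ 3) := by
  have hD (t : ℝ) : sfbQ ν ξ - sfbSigma ν * cos (ν * t) ≠ 0 := (sfbD_pos hν0 ξ t).ne'
  have hB : (fun t => sfbB ν ξ t)
      = fun t => sfbM ν ξ * ((sfbQ ν ξ - sfbSigma ν * cos (ν * t))⁻¹ : ℝ) - 1 := by
    funext t
    rw [sfbB, sfbD, div_eq_mul_inv, Complex.ofReal_inv]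
  have hB' : deriv (fun t => sfbB ν ξ t) = fun t => sfbM ν ξ *
      (-(sfbSigma ν * ν * sin (ν * t)) / (sfbQ ν ξ - sfbSigma ν * cos (ν * t)) ^ 2 : ℝ) := by
    funext t
    rw [hB]
    exact (((hasDerivAt_inv_sub_mul_cos (hD t)).ofReal_comp.const_mul _).sub_const 1).deriv
  rw [hB', deriv_const_mul_field, (hasDerivAt_sin_div_sq_sub_mul_cos (hD τ)).ofReal_comp.deriv,
    sfbD]
  push_cast
  ring

theorem gauged_residual_eq_zero {ν σ q q' u v D : ℝ} (hσ : σ ^ 2 = 2 * ν ^ 2 - ν ^ 4)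
    (hq' : q' ^ 2 = σ ^ 2 * (q ^ 2 - 2 * ν ^ 2)) (huv : u ^ 2 + v ^ 2 = 1)
    (hD : D = q - σ * u) (hD0 : D ≠ 0) {M : ℂ} (hM : M = ν ^ 2 * q - q' * I) :
    ((ν ^ 2 * q' - σ ^ 2 * q * I) * D - M * q') / D ^ 2
      + I * (M * (ν ^ 2 * (2 * σ ^ 2 * v ^ 2 - σ * u * D) / D ^ 3))
      + I * ((‖M / D - 1‖ : ℂ) ^ 2 - 1) * (M / D - 1) = 0 := by
  have hD0' : (D : ℂ) ≠ 0 := by exact_mod_cast hD0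
  have hnorm : (‖M / D - 1‖ : ℂ) ^ 2 = ((ν ^ 2 * q - D) ^ 2 + q' ^ 2) / D ^ 2 := by
    rw [← Complex.ofReal_pow, div_sub_one hD0', norm_div, div_pow, Complex.norm_real,
      Real.norm_eq_abs, sq_abs, Complex.sq_norm, hM,
      show (ν ^ 2 * q - q' * I - D : ℂ) = ((ν ^ 2 * q - D : ℝ) : ℂ) + ((-q' : ℝ) : ℂ) * I by
        push_cast; ring, Complex.normSq_add_mul_I]
    push_cast; ring
  have hE : (D : ℂ) * ((ν ^ 2 * q' - σ ^ 2 * q * I) * D - M * q')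
      + I * M * ν ^ 2 * (2 * σ ^ 2 * v ^ 2 - σ * u * D)
      + I * ((ν ^ 2 * q - D) ^ 2 + q' ^ 2 - D ^ 2) * (M - D) = 0 := by
    have hσ' : (σ : ℂ) ^ 2 = 2 * ν ^ 2 - ν ^ 4 := by exact_mod_cast hσ
    have hq'' : (q' : ℂ) ^ 2 = σ ^ 2 * (q ^ 2 - 2 * ν ^ 2) := by exact_mod_cast hq'
    have huv' : (u : ℂ) ^ 2 + v ^ 2 = 1 := by exact_mod_cast huv
    have hD' : (D : ℂ) = q - σ * u := by exact_mod_cast hD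
    subst hM
    -- Modulo `I ^ 2 = -1`, `v ^ 2 = 1 - u ^ 2` and `σ * u = q - D`, the left side reduces to
    -- `I q (2ν² - ν⁴ - σ²) D² + I M (q'² - σ² (q² - 2ν²) + (ν⁴ + σ² - 2ν²) q²)`;
    -- the `I_sq` coefficient is the `I ^ 2`-part of what remains.
    linear_combination (norm := skip) (-I * q * D ^ 2 + I * (ν ^ 2 * q - q' * I) * q ^ 2) * hσ'
      + I * (ν ^ 2 * q - q' * I) * hq'' + 2 * ν ^ 2 * σ ^ 2 * I * (ν ^ 2 * q - q' * I) * huv'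
      + (-q' * ν ^ 2 * (2 * σ ^ 2 * v ^ 2 - σ * u * D) - q' * ((ν ^ 2 * q - D) ^ 2 + q' ^ 2 - D ^ 2)
        + q' * q ^ 2 * (σ ^ 2 - 2 * ν ^ 2 + ν ^ 4) + q' * (q' ^ 2 - σ ^ 2 * (q ^ 2 - 2 * ν ^ 2))
        + 2 * ν ^ 2 * σ ^ 2 * q' * (u ^ 2 + v ^ 2 - 1)) * Complex.I_sq
    rw [hD']
    ring
  calc _ = ((D : ℂ) * ((ν ^ 2 * q' - σ ^ 2 * q * I) * D - M * q')
      + I * M * ν ^ 2 * (2 * σ ^ 2 * v ^ 2 - σ * u * D)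
      + I * ((ν ^ 2 * q - D) ^ 2 + q' ^ 2 - D ^ 2) * (M - D)) / D ^ 3 := by
        rw [hnorm]; field_simp
    _ = 0 := by rw [hE, zero_div]

theorem sfb_solves_nls
    (ν : ℝ) (hν0 : 0 < ν) (hν2 : ν < Real.sqrt 2) :
    ∀ ξ τ : ℝ,
      deriv (fun x => sfbA ν x τ) ξ +
        Complex.I * deriv (deriv (fun t => sfbA ν ξ t)) τ +
        Complex.I * (‖sfbA ν ξ τ‖ : ℂ) ^ 2 * sfbA ν ξ τ = 0 := by
  intro ξ τ
  have hν : ν ^ 2 ≤ 2 := ((lt_sqrt hν0.le).1 hν2).le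
  have hB := hasDerivAt_sfbB_fst hν0 ξ τ
  rw [nls_residual_of_gauge (sfbA_eq_exp_mul_sfbB hν0 hν) hB.differentiableAt, hB.deriv,
    deriv_deriv_sfbB_snd hν0, sfbB]
  exact mul_eq_zero_of_right _ <| gauged_residual_eq_zero (sfbSigma_sq hν) (sfbQ'_sq ν ξ)
    (cos_sq_add_sin_sq _) rfl (sfbD_pos hν0 ξ τ).ne' rfl
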